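/- Let H be a complex Hilbert space and let A, K be bounded linear operators on H with A positive. Then |(AK)*| ≤ ‖K‖ A, i.e., ‖K‖ A − |(AK)*| is a positive operator. -/

import Mathlib

open ComplexOrder ContinuousLinearMap

section CStarAlgebra

variable {A : Type*} [NonUnitalCStarAlgebra A] [PartialOrder A] [StarOrderedRing A]

lemma CFC.le_of_mul_self_le_mul_self {a b : A} (ha : 0 ≤ a) (hb : 0 ≤ b) (h : a * a ≤ b * b) :
    a ≤ b := by
  simpa only [sqrt_mul_self a ha, sqrt_mul_self b hb] using sqrt_le_sqrt _ _ h

lemma CStarAlgebra.mul_mul_star_mul_star_le_norm_sq_smul (a k : A) :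
    a * k * star k * star a ≤ ‖k‖ ^ 2 • (a * star a) := by
  have h := star_right_conjugate_le_norm_smul (a := a) (b := k * star k)
  rwa [CStarRing.norm_self_mul_star, ← sq, ← mul_assoc] at h

end CStarAlgebra

lemma ContinuousLinearMap.nonneg_iff_forall_inner_nonneg {H : Type*} [NormedAddCommGroup H]
    [InnerProductSpace ℂ H] (T : H →L[ℂ] H) :
    0 ≤ T ↔ ∀ x : H, 0 ≤ (inner ℂ (T x) x : ℂ) := by
  simp [nonneg_iff_isPositive, isPositive_iff_complex, Complex.nonneg_iff, Complex.ext_iff,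
    and_comm]

/-- If `A` is positive then `|(AK)*| ≤ ‖K‖ A`, i.e. `‖K‖ A − |(AK)*|` is a positive
operator, where `|(AK)*|` (here called `B`) is the unique positive square root of
`((AK)*)* (AK)* = (AK)(AK)*`. -/
theorem abs_adjoint_prod_le
    {H : Type*} [NormedAddCommGroup H] [InnerProductSpace ℂ H] [CompleteSpace H]
    (A K : H →L[ℂ] H)
    (hA : ∀ x : H, 0 ≤ (inner ℂ (A x) x : ℂ))
    (B : H →L[ℂ] H)
    (hB : ∀ x : H, 0 ≤ (inner ℂ (B x) x : ℂ))
    (hB2 : B ∘L B = adjoint (adjoint (A ∘L K)) ∘L adjoint (A ∘L K)) :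
    ∀ x : H, 0 ≤ (inner ℂ ((‖K‖ • A - B) x) x : ℂ) := by
  rw [← nonneg_iff_forall_inner_nonneg] at hA hB ⊢
  have hAsa : star A = A := (IsSelfAdjoint.of_nonneg hA).star_eq
  have hBB : B * B = A * K * star K * star A := by
    have h : B * B = A * K * star (A * K) := by rwa [adjoint_adjoint, ← star_eq_adjoint] at hB2
    rw [h, star_mul, ← mul_assoc]
  have hsq : B * B ≤ (‖K‖ • A) * (‖K‖ • A) := by
    rw [smul_mul_smul_comm, ← sq ‖K‖, hBB]
    simpa only [hAsa] using CStarAlgebra.mul_mul_star_mul_star_le_norm_sq_smul A K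
  exact sub_nonneg.mpr (CFC.le_of_mul_self_le_mul_self hB (smul_nonneg (norm_nonneg K) hA) hsq)
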